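/- Let F be a finite field with q elements and T = Tr(F). Then the independence number of the commuting graph Γ(T) is q + 1. -/

import Mathlib

open Matrix

/-- The ring of 2×2 upper triangular matrices over `R`. -/
def Tri (R : Type*) [CommRing R] : Subring (Matrix (Fin 2) (Fin 2) R) where
  carrier := {A | A 1 0 = 0}
  mul_mem' := by
    intro a b ha hb
    simp only [Set.mem_setOf_eq] at *
    simp [Matrix.mul_apply, Fin.sum_univ_two, ha, hb]
  one_mem' := by simp [Matrix.one_apply]
  add_mem' := by
    intro a b ha hb
    simp_all [Matrix.add_apply]
  zero_mem' := by simp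
  neg_mem' := by
    intro a ha
    simp_all

/-- The commuting graph of a ring `T`: vertices are the noncentral elements,
two distinct vertices are adjacent iff they commute. -/
def commGraph (T : Type*) [Ring T] : SimpleGraph {x : T // x ∉ Set.center T} where
  Adj a b := a ≠ b ∧ (a : T) * b = b * a
  symm := by
    constructor
    rintro a b ⟨h1, h2⟩
    exact ⟨h1.symm, h2.symm⟩
  loopless := by constructor; rintro a ⟨h, _⟩; exact h rfl

/-!
Write `A = !![a, b; 0, d]`. Two elements of `Tri F` commute iff their vectors `(a - d, b)` are
proportional, and `A` is central iff this vector vanishes. Hence `A ↦ [a - d : b] ∈ ℙ¹(F)` is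
defined on the vertices of the commuting graph, hits every point, and two vertices are
non-adjacent exactly when their points differ: the complement of the commuting graph is the
pullback of the complete graph on `ℙ¹(F)`, whose clique number is `|ℙ¹(F)| = q + 1`.
-/

open scoped LinearAlgebra.Projectivization

namespace Projectivization

theorem mk_eq_mk_iff_mul_eq_mul {K : Type*} [Field K] {v w : Fin 2 → K} (hv : v ≠ 0)
    (hw : w ≠ 0) : mk K v hv = mk K w hw ↔ v 0 * w 1 = v 1 * w 0 := by
  rw [mk_eq_mk_iff']
  constructor
  · rintro ⟨a, rfl⟩
    simp only [Pi.smul_apply, smul_eq_mul]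
    ring
  · intro h
    have hw' : w 0 ≠ 0 ∨ w 1 ≠ 0 := by
      by_contra! h0
      exact hw (funext fun i => by fin_cases i <;> simp [h0.1, h0.2])
    rcases hw' with hw0 | hw1
    · refine ⟨v 0 / w 0, funext fun i => ?_⟩
      fin_cases i
      · simp [hw0]
      · simp only [Fin.isValue, Fin.mk_one, Pi.smul_apply, smul_eq_mul]
        field_simp
        linear_combination h
    · refine ⟨v 1 / w 1, funext fun i => ?_⟩
      fin_cases i
      · simp only [Fin.isValue, Fin.zero_eta, Pi.smul_apply, smul_eq_mul]
        field_simp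
        linear_combination -h
      · simp [hw1]

end Projectivization

namespace SimpleGraph

theorem cliqueNum_comap_top {V W : Type*} [Finite W] {f : V → W} (hf : f.Surjective) :
    ((⊤ : SimpleGraph W).comap f).cliqueNum = Nat.card W := by
  classical
  have := Fintype.ofFinite W
  have hle : ∀ n ∈ {n | ∃ s, ((⊤ : SimpleGraph W).comap f).IsNClique n s}, n ≤ Nat.card W := by
    rintro n ⟨s, hs⟩
    have hinj : Set.InjOn f s := fun a ha b hb hab => by
      by_contra hne
      exact hs.isClique ha hb hne hab
    rw [← hs.card_eq, Nat.card_eq_fintype_card, ← Finset.card_univ]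
    exact Finset.card_le_card_of_injOn f (fun _ _ => Finset.mem_univ _) hinj
  have hclique : ((⊤ : SimpleGraph W).comap f).IsNClique (Nat.card W)
      (Finset.univ.image (Function.surjInv hf)) := by
    refine ⟨?_, by rw [Finset.card_image_of_injective _ (Function.injective_surjInv hf),
      Finset.card_univ, Nat.card_eq_fintype_card]⟩
    simp only [Finset.coe_image, Finset.coe_univ, Set.image_univ]
    rintro _ ⟨a, rfl⟩ _ ⟨b, rfl⟩ hne
    simpa [Function.surjInv_eq hf] using fun h => hne (congrArg _ h)
  exact le_antisymm (csSup_le ⟨_, _, hclique⟩ hle) (le_csSup ⟨_, hle⟩ ⟨_, hclique⟩)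

end SimpleGraph

namespace Tri

section CommRing

variable {R : Type*} [CommRing R]

def commVec (A : Tri R) : Fin 2 → R := ![A.1 0 0 - A.1 1 1, A.1 0 1]

theorem commute_iff {A B : Tri R} :
    Commute A B ↔ commVec A 0 * commVec B 1 = commVec A 1 * commVec B 0 := by
  have hA : A.1 1 0 = 0 := A.2
  have hB : B.1 1 0 = 0 := B.2
  rw [Commute, SemiconjBy, ← Subtype.coe_inj, Subring.coe_mul, Subring.coe_mul]
  simp only [commVec, Matrix.cons_val_zero, Matrix.cons_val_one]
  constructor
  · intro h
    have h01 := congrFun (congrFun h 0) 1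
    simp only [Matrix.mul_apply, Fin.sum_univ_two] at h01
    linear_combination h01
  · intro h
    ext i j
    fin_cases i <;> fin_cases j <;>
      simp only [Fin.zero_eta, Fin.mk_one, Fin.isValue, Matrix.mul_apply, Fin.sum_univ_two, hA,
        hB, zero_mul, add_zero, zero_add, mul_comm]
    linear_combination h

theorem mem_center_iff {A : Tri R} : A ∈ Set.center (Tri R) ↔ commVec A = 0 := by
  rw [Semigroup.mem_center_iff]
  constructor
  · intro h
    have h1 : commVec A 1 = 0 := by
      simpa [commVec] using commute_iff.1 (h ⟨!![1, 0; 0, 0], rfl⟩)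
    have h0 : commVec A 0 = 0 := by
      simpa [commVec, eq_comm] using commute_iff.1 (h ⟨!![0, 1; 0, 0], rfl⟩)
    ext i
    fin_cases i
    exacts [h0, h1]
  · intro h B
    exact commute_iff.2 (by simp [h])

end CommRing

variable {F : Type*} [Field F]

noncomputable def commPoint (A : {A : Tri F // A ∉ Set.center (Tri F)}) : ℙ F (Fin 2 → F) :=
  Projectivization.mk F (commVec A.1) fun h => A.2 (mem_center_iff.2 h)

theorem commPoint_eq_commPoint_iff {A B : {A : Tri F // A ∉ Set.center (Tri F)}} :
    commPoint A = commPoint B ↔ Commute A.1 B.1 := by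
  rw [commPoint, commPoint, Projectivization.mk_eq_mk_iff_mul_eq_mul, commute_iff]

theorem commPoint_surjective : Function.Surjective (commPoint (F := F)) := by
  refine Projectivization.ind fun v hv => ?_
  have hvec : commVec ⟨!![v 0, v 1; 0, 0], rfl⟩ = v := by
    ext i; fin_cases i <;> simp [commVec]
  exact ⟨⟨⟨!![v 0, v 1; 0, 0], rfl⟩, fun h => hv (hvec ▸ mem_center_iff.1 h)⟩,
    by simp only [commPoint, hvec]⟩

theorem compl_commGraph_eq_comap :
    (commGraph (Tri F))ᶜ = (⊤ : SimpleGraph (ℙ F (Fin 2 → F))).comap commPoint := by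
  ext A B
  change A ≠ B ∧ ¬(A ≠ B ∧ Commute A.1 B.1) ↔ ¬commPoint A = commPoint B
  rw [commPoint_eq_commPoint_iff]
  constructor
  · rintro ⟨hne, hnc⟩ hc
    exact hnc ⟨hne, hc⟩
  · intro hnc
    exact ⟨by rintro rfl; exact hnc (Commute.refl _), fun h => hnc h.2⟩

end Tri

/-- Theorem 2.9(ii): the independence number of the commuting graph of `Tri F`
over a finite field `F` of order `q` is `q + 1`. (An independent set of a
graph is precisely a clique of its complement, so the independence number is
the clique number of the complement graph.) -/
theorem indepNum_commGraph_tri_field {F : Type*} [Field F] [Fintype F] (q : ℕ)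
    (hq : Fintype.card F = q) :
    ((commGraph (Tri F))ᶜ).cliqueNum = q + 1 := by
  rw [Tri.compl_commGraph_eq_comap, SimpleGraph.cliqueNum_comap_top Tri.commPoint_surjective,
    Projectivization.card_of_finrank_two F _ (Module.finrank_fin_fun F),
    Nat.card_eq_fintype_card, hq]
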